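/- Let β : ℝ³ → ℝ³ be differentiable at x, ε(x) > 0 and γ(x) ∈ ℝ. For 1 ≤ i ≤ 3 define ℛ^i ∈ ℝ^{3×3} by (ℛ^i)_{jk} = ε_{jik} (Levi–Civita), and set 𝒜^i := [[0_{3,3}, −ℛ^i],[−(ℛ^i)ᵀ, β_i I₃]] and 𝒦 := [[ε⁻¹ I₃, 0_{3,3}],[0_{3,3}, ∇β − V_{∇×β} + γ I₃]], where (∇β)_{jk} = ∂_k β_j is the Jacobian. Then for any b, p : ℝ³ → ℝ³ differentiable at x and z := (b, p), one has, at x, 𝒦 z + Σ_{i=1}^3 𝒜^i ∂_i z = ( ε⁻¹ b − ∇×p , ∇×b − β×(∇×p) + ∇(β·p) + γ p ). In other words, the first-order Friedrichs operator with these coefficients applied to (b, p) reproduces the system ε⁻¹b − ∇×p = 0, ∇×b + L_β p + γp = f_p, where L_β p := −β×(∇×p) + ∇(β·p) is the Lie derivative. -/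

import Mathlib

open Matrix

/-- The Levi–Civita symbol on `{0, 1, 2}`. -/
def levCiv (i j k : Fin 3) : ℝ :=
  if (i = 0 ∧ j = 1 ∧ k = 2) ∨ (i = 1 ∧ j = 2 ∧ k = 0) ∨ (i = 2 ∧ j = 0 ∧ k = 1) then 1
  else if (i = 0 ∧ j = 2 ∧ k = 1) ∨ (i = 2 ∧ j = 1 ∧ k = 0) ∨ (i = 1 ∧ j = 0 ∧ k = 2) then -1
  else 0

/-- Partial derivative `∂_j u_k` of the `k`-th component of a vector field `u : ℝ³ → ℝ³`. -/
noncomputable def pd3 (j : Fin 3) (u : (Fin 3 → ℝ) → Fin 3 → ℝ) (k : Fin 3) (x : Fin 3 → ℝ) : ℝ :=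
  fderiv ℝ (fun y => u y k) x (Pi.single j 1)

/-- The curl `(∇×u)_i = Σ_{j,k} ε_{ijk} ∂_j u_k` of a vector field `u : ℝ³ → ℝ³`. -/
noncomputable def curl3 (u : (Fin 3 → ℝ) → Fin 3 → ℝ) (x : Fin 3 → ℝ) : Fin 3 → ℝ :=
  fun i => ∑ j, ∑ k, levCiv i j k * pd3 j u k x

/-- The cross-product matrix `V_α`, characterized by `V_α s = α × s`. -/
def crossMat (α : Fin 3 → ℝ) : Matrix (Fin 3) (Fin 3) ℝ :=
  !![0, -α 2, α 1; α 2, 0, -α 0; -α 1, α 0, 0]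

/-! Both sides reduce to `(ε⁻¹ b − ∇×p, ∇×b + (∇p) β + (∇β)ᵀ p + γ p)`, where
`(∇u)_{jk} = ∂_k u_j`. On the left, `∇β − V_{∇×β} = (∇β)ᵀ`; the `ℛⁱ` are antisymmetric with
`Σᵢ ℛⁱ ∂ᵢ u = ∇×u`, so the off-diagonal blocks of `Σᵢ 𝒜ⁱ ∂ᵢ` give `∓∇×`, and the diagonal block
gives `Σᵢ βᵢ ∂ᵢ p = (∇p) β`. On the right, `β × (∇×p) = (∇p)ᵀ β − (∇p) β` and
`∇(β·p) = (∇β)ᵀ p + (∇p)ᵀ β`, so the `(∇p)ᵀ β` terms cancel. -/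

theorem Sum.elim_sum {ι α β M : Type*} [AddCommMonoid M] (s : Finset ι)
    (f : ι → α → M) (g : ι → β → M) :
    Sum.elim (∑ i ∈ s, f i) (∑ i ∈ s, g i) = ∑ i ∈ s, Sum.elim (f i) (g i) := by
  ext (a | b) <;> simp [Finset.sum_apply]

theorem fderiv_dotProduct_apply {𝕜 ι E : Type*} [NontriviallyNormedField 𝕜] [Fintype ι]
    [NormedAddCommGroup E] [NormedSpace 𝕜 E] {f g : E → ι → 𝕜} {x : E}
    (hf : DifferentiableAt 𝕜 f x) (hg : DifferentiableAt 𝕜 g x) (v : E) :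
    fderiv 𝕜 (fun y => f y ⬝ᵥ g y) x v = fderiv 𝕜 f x v ⬝ᵥ g x + f x ⬝ᵥ fderiv 𝕜 g x v := by
  have hfi (i : ι) := differentiableAt_pi.mp hf i
  have hgi (i : ι) := differentiableAt_pi.mp hg i
  simp only [dotProduct]
  rw [fderiv_fun_sum (A := fun i y => f y i * g y i) fun i _ => (hfi i).mul (hgi i),
    _root_.sum_apply, ← Finset.sum_add_distrib]
  refine Finset.sum_congr rfl fun i _ => ?_
  rw [fderiv_fun_mul (hfi i) (hgi i), fderiv_apply hf, fderiv_apply hg]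
  simp only [_root_.add_apply, _root_.smul_apply, ContinuousLinearMap.comp_apply,
    ContinuousLinearMap.proj_apply, smul_eq_mul]
  ring

def levCivMat (i : Fin 3) : Matrix (Fin 3) (Fin 3) ℝ :=
  Matrix.of fun j k => levCiv j i k

theorem levCivMat_transpose (i : Fin 3) : (levCivMat i)ᵀ = -levCivMat i := by
  ext j k
  fin_cases i <;> fin_cases j <;> fin_cases k <;> simp [levCivMat, levCiv]

noncomputable def jacobian3 (u : (Fin 3 → ℝ) → Fin 3 → ℝ) (x : Fin 3 → ℝ) :
    Matrix (Fin 3) (Fin 3) ℝ :=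
  Matrix.of fun j k => pd3 k u j x

section VectorCalculus

variable (u : (Fin 3 → ℝ) → Fin 3 → ℝ) (x : Fin 3 → ℝ)

theorem curl3_eq :
    curl3 u x =
      ![pd3 1 u 2 x - pd3 2 u 1 x, pd3 2 u 0 x - pd3 0 u 2 x, pd3 0 u 1 x - pd3 1 u 0 x] := by
  ext i
  fin_cases i <;> simp [curl3, levCiv, Fin.sum_univ_three] <;> ring

theorem sum_levCivMat_mulVec : ∑ i, levCivMat i *ᵥ (fun k => pd3 i u k x) = curl3 u x := by
  ext j
  simp only [Finset.sum_apply, mulVec, dotProduct, levCivMat, of_apply, curl3]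

theorem sum_smul_pd3 (a : Fin 3 → ℝ) :
    ∑ i, a i • (fun k => pd3 i u k x) = jacobian3 u x *ᵥ a := by
  ext j
  simp [Finset.sum_apply, mulVec, dotProduct, jacobian3, mul_comm]

theorem crossMat_curl3 : crossMat (curl3 u x) = jacobian3 u x - (jacobian3 u x)ᵀ := by
  ext j k
  fin_cases j <;> fin_cases k <;> simp [crossMat, curl3_eq, jacobian3]

theorem cross_curl3 (a : Fin 3 → ℝ) :
    a ⨯₃ curl3 u x = (jacobian3 u x)ᵀ *ᵥ a - jacobian3 u x *ᵥ a := by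
  ext j
  fin_cases j <;>
    simp [cross_apply, curl3_eq, jacobian3, mulVec, dotProduct, Fin.sum_univ_three] <;> ring

variable {u x}

theorem pd3_eq_fderiv_apply (hu : DifferentiableAt ℝ u x) (j k : Fin 3) :
    pd3 j u k x = fderiv ℝ u x (Pi.single j 1) k := by
  rw [pd3, fderiv_apply hu]
  rfl

theorem gradient_dotProduct {v : (Fin 3 → ℝ) → Fin 3 → ℝ} (hu : DifferentiableAt ℝ u x)
    (hv : DifferentiableAt ℝ v x) :
    (fun j => fderiv ℝ (fun y => u y ⬝ᵥ v y) x (Pi.single j 1)) =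
      (jacobian3 u x)ᵀ *ᵥ v x + (jacobian3 v x)ᵀ *ᵥ u x := by
  ext j
  rw [fderiv_dotProduct_apply hu hv, dotProduct_comm (u x)]
  simp only [Pi.add_apply, mulVec, dotProduct, transpose_apply, jacobian3, of_apply,
    pd3_eq_fderiv_apply hu, pd3_eq_fderiv_apply hv]

end VectorCalculus

theorem stmt12_general (β b p : (Fin 3 → ℝ) → Fin 3 → ℝ) (x : Fin 3 → ℝ) (e g : ℝ)
    (hβ : DifferentiableAt ℝ β x)
    (hp : DifferentiableAt ℝ p x) :
    let R : Fin 3 → Matrix (Fin 3) (Fin 3) ℝ := fun i => Matrix.of fun j k => levCiv j i k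
    let A : Fin 3 → Matrix (Fin 3 ⊕ Fin 3) (Fin 3 ⊕ Fin 3) ℝ := fun i =>
      Matrix.fromBlocks 0 (-(R i)) (-(R i)ᵀ) (β x i • 1)
    let K : Matrix (Fin 3 ⊕ Fin 3) (Fin 3 ⊕ Fin 3) ℝ :=
      Matrix.fromBlocks (e⁻¹ • 1) 0 0
        ((Matrix.of fun j k => pd3 k β j x) - crossMat (curl3 β x) + g • 1)
    K.mulVec (Sum.elim (b x) (p x)) +
        ∑ i, (A i).mulVec (Sum.elim (fun k => pd3 i b k x) (fun k => pd3 i p k x)) =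
      Sum.elim (e⁻¹ • b x - curl3 p x)
        (curl3 b x - crossProduct (β x) (curl3 p x) +
          (fun j => fderiv ℝ (fun y => β y ⬝ᵥ p y) x (Pi.single j 1)) + g • p x) := by
  intro R A K
  have hK : K *ᵥ Sum.elim (b x) (p x) =
      Sum.elim (e⁻¹ • b x) ((jacobian3 β x)ᵀ *ᵥ p x + g • p x) := by
    change fromBlocks (e⁻¹ • 1) 0 0 (jacobian3 β x - crossMat (curl3 β x) + g • 1) *ᵥ _ = _
    simp only [fromBlocks_mulVec, crossMat_curl3, sub_sub_cancel, add_mulVec, smul_mulVec,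
      one_mulVec, zero_mulVec, add_zero, zero_add, Sum.elim_comp_inl, Sum.elim_comp_inr]
  have hA : ∑ i, A i *ᵥ Sum.elim (fun k => pd3 i b k x) (fun k => pd3 i p k x) =
      Sum.elim (-curl3 p x) (curl3 b x + jacobian3 p x *ᵥ β x) := by
    change ∑ i, fromBlocks 0 (-levCivMat i) (-(levCivMat i)ᵀ) (β x i • 1) *ᵥ _ = _
    simp only [fromBlocks_mulVec, levCivMat_transpose, neg_neg, neg_mulVec, smul_mulVec,
      one_mulVec, zero_mulVec, zero_add, Sum.elim_comp_inl, Sum.elim_comp_inr,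
      ← Sum.elim_sum, Finset.sum_neg_distrib, Finset.sum_add_distrib, sum_levCivMat_mulVec,
      sum_smul_pd3]
  rw [hK, hA, ← Sum.elim_add_add, gradient_dotProduct hβ hp, cross_curl3]
  congr 1
  abel

/-- With `ℛⁱ` given by `(ℛⁱ)_{jk} = ε_{jik}`,
`𝒜ⁱ = [[0, −ℛⁱ],[−(ℛⁱ)ᵀ, βᵢ I₃]]` and `𝒦 = [[ε⁻¹ I₃, 0],[0, ∇β − V_{∇×β} + γ I₃]]`, the
first-order Friedrichs operator applied to `z = (b, p)` reproduces
`(ε⁻¹ b − ∇×p, ∇×b − β×(∇×p) + ∇(β·p) + γ p)`. -/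
theorem stmt12 (β b p : (Fin 3 → ℝ) → Fin 3 → ℝ) (x : Fin 3 → ℝ) (e g : ℝ) (he : 0 < e)
    (hβ : DifferentiableAt ℝ β x) (hb : DifferentiableAt ℝ b x)
    (hp : DifferentiableAt ℝ p x) :
    let R : Fin 3 → Matrix (Fin 3) (Fin 3) ℝ := fun i => Matrix.of fun j k => levCiv j i k
    let A : Fin 3 → Matrix (Fin 3 ⊕ Fin 3) (Fin 3 ⊕ Fin 3) ℝ := fun i =>
      Matrix.fromBlocks 0 (-(R i)) (-(R i)ᵀ) (β x i • 1)
    let K : Matrix (Fin 3 ⊕ Fin 3) (Fin 3 ⊕ Fin 3) ℝ :=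
      Matrix.fromBlocks (e⁻¹ • 1) 0 0
        ((Matrix.of fun j k => pd3 k β j x) - crossMat (curl3 β x) + g • 1)
    K.mulVec (Sum.elim (b x) (p x)) +
        ∑ i, (A i).mulVec (Sum.elim (fun k => pd3 i b k x) (fun k => pd3 i p k x)) =
      Sum.elim (e⁻¹ • b x - curl3 p x)
        (curl3 b x - crossProduct (β x) (curl3 p x) +
          (fun j => fderiv ℝ (fun y => β y ⬝ᵥ p y) x (Pi.single j 1)) + g • p x) :=
  stmt12_general β b p x e g hβ hp
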